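/- Under the assumptions G smooth with G(1)=G'(1)=0, G''(1)=1, Γ = 3+G'''(1) ≠ 0, γ = 1/Γ > 0, for all sufficiently small ε > 0 there exists ρ_m ∈ (0,1) with F_ε(ρ_m) = 0 and 1 - (3γε² + γε³) ≤ ρ_m ≤ 1 - (3γε² - γε³), where F_ε(ρ) = -(1-ε²)(ρ-1)²/(2ρ) + G(ρ). -/

import Mathlib

set_option maxHeartbeats 1000000

open Set

lemma idw_eq_id {f : ℝ → ℝ} (hf : ContDiff ℝ (⊤ : ℕ∞) f) {s : Set ℝ} (hs : UniqueDiffOn ℝ s)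
    {x : ℝ} (hx : x ∈ s) (n : ℕ) : iteratedDerivWithin n f s x = iteratedDeriv n f x := by
  rw [iteratedDerivWithin_eq_iteratedFDerivWithin, iteratedDeriv_eq_iteratedFDeriv]
  congr 1
  exact ((((contDiff_iff_ftaylorSeries (n := (⊤ : ℕ∞))).mp (hf.of_le (by simp))).hasFTaylorSeriesUpToOn
    s).eq_iteratedFDerivWithin_of_uniqueDiffOn (by exact_mod_cast le_top) hs hx).symm

lemma taylor4 (G : ℝ → ℝ) (hG : ContDiff ℝ (⊤ : ℕ∞) G)
    (hG0 : G 1 = 0) (hG1 : deriv G 1 = 0) (hG2 : iteratedDeriv 2 G 1 = 1) :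
    ∃ M : ℝ, 0 ≤ M ∧ ∀ δ ∈ Icc (0:ℝ) (1/2),
      |G (1 - δ) - (δ^2/2 - iteratedDeriv 3 G 1 * δ^3/6)| ≤ M * δ^4 := by
  set c := iteratedDeriv 3 G 1 with hc
  set K : ℝ → ℝ := fun t => G (1 - t) with hKdef
  have hK : ContDiff ℝ (⊤ : ℕ∞) K := hG.comp (contDiff_const.sub contDiff_id)
  have hKit : ∀ n : ℕ, iteratedDeriv n K 0 = (-1:ℝ)^n * iteratedDeriv n G 1 := by
    intro n
    have hKeq : K = fun x => G (1 + -x) := by funext t; simp [hKdef, sub_eq_add_neg]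
    have h2 := iteratedDeriv_comp_neg n (fun z => G (1 + z)) 0
    have h3 := congrFun (iteratedDeriv_comp_const_add n G 1) (-0 : ℝ)
    rw [hKeq]
    rw [h2, h3]
    norm_num [smul_eq_mul]
  have huniq : UniqueDiffOn ℝ (Icc (0:ℝ) (1/2)) := uniqueDiffOn_Icc (by norm_num)
  obtain ⟨C, hC⟩ := exists_taylor_mean_remainder_bound (n := 3) (f := K)
    (by norm_num : (0:ℝ) ≤ 1/2) (hK.contDiffOn.of_le (WithTop.coe_le_coe.mpr le_top))
  refine ⟨max C 0, le_max_right _ _, fun δ hδ => ?_⟩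
  have h0mem : (0:ℝ) ∈ Icc (0:ℝ) (1/2) := by norm_num
  have htp : taylorWithinEval K 3 (Icc (0:ℝ) (1/2)) 0 δ = δ^2/2 - c*δ^3/6 := by
    rw [taylor_within_apply]
    have e0 : iteratedDerivWithin 0 K (Icc (0:ℝ) (1/2)) 0 = 0 := by
      rw [idw_eq_id hK huniq h0mem]; simpa [hKdef] using hG0
    have e1 : iteratedDerivWithin 1 K (Icc (0:ℝ) (1/2)) 0 = 0 := by
      rw [idw_eq_id hK huniq h0mem, hKit]; simp [iteratedDeriv_one, hG1]
    have e2 : iteratedDerivWithin 2 K (Icc (0:ℝ) (1/2)) 0 = 1 := by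
      rw [idw_eq_id hK huniq h0mem, hKit]; simp [hG2]
    have e3 : iteratedDerivWithin 3 K (Icc (0:ℝ) (1/2)) 0 = -c := by
      rw [idw_eq_id hK huniq h0mem, hKit]; simp [hc]; ring
    rw [Finset.sum_range_succ, Finset.sum_range_succ, Finset.sum_range_succ,
      Finset.sum_range_succ, e0, e1, e2, e3]
    norm_num [Nat.factorial]
    ring
  have hb := hC δ hδ
  rw [htp] at hb
  have hKδ : K δ = G (1 - δ) := rfl
  rw [hKδ] at hb
  calc |G (1 - δ) - (δ^2/2 - c*δ^3/6)| ≤ C * (δ - 0)^(3+1) := hb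
    _ ≤ max C 0 * δ^4 := by
        have h4 : (δ - 0)^(3+1) = δ^4 := by ring
        rw [h4]
        exact mul_le_mul_of_nonneg_right (le_max_left _ _) (by positivity)

/-- For `γ = 1/(3 + G'''(1)) > 0`, for all sufficiently small `ε > 0` there is a
zero `ρ_m ∈ (0,1)` of `F_ε(ρ) = -(1-ε²)(ρ-1)²/(2ρ) + G(ρ)` with
`1 - (3γε² + γε³) ≤ ρ_m ≤ 1 - (3γε² - γε³)`. -/
theorem rho_m_exists (G : ℝ → ℝ) (hG : ContDiff ℝ (⊤ : ℕ∞) G)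
    (hG0 : G 1 = 0) (hG1 : deriv G 1 = 0) (hG2 : iteratedDeriv 2 G 1 = 1)
    (γ : ℝ) (hΓ : 3 + iteratedDeriv 3 G 1 ≠ 0) (hγ : γ = 1 / (3 + iteratedDeriv 3 G 1))
    (hγpos : 0 < γ)
    (F : ℝ → ℝ → ℝ)
    (hF : ∀ ε ρ, F ε ρ = -(1 - ε ^ 2) * (ρ - 1) ^ 2 / (2 * ρ) + G ρ) :
    ∃ ε₀ > 0, ∀ ε : ℝ, 0 < ε → ε < ε₀ →
      ∃ ρm : ℝ, 0 < ρm ∧ ρm < 1 ∧ F ε ρm = 0 ∧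
        1 - (3 * γ * ε ^ 2 + γ * ε ^ 3) ≤ ρm ∧ ρm ≤ 1 - (3 * γ * ε ^ 2 - γ * ε ^ 3) := by
  obtain ⟨M, hM0, hTay⟩ := taylor4 G hG hG0 hG1 hG2
  set c := iteratedDeriv 3 G 1 with hcdef
  have hγc : γ * (3 + c) = 1 := by rw [hγ]; field_simp
  set C₁ : ℝ := |c|/3 + 2*M with hC₁def
  have hC₁0 : 0 ≤ C₁ := by positivity
  clear_value c C₁
  refine ⟨min 1 (min (1/(8*γ)) (1/(48*C₁*γ^2+1))), by positivity, fun ε hε hεlt => ?_⟩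
  have hε1 : ε ≤ 1 := le_of_lt (lt_of_lt_of_le hεlt (min_le_left _ _))
  have hε2 : ε < 1/(8*γ) := lt_of_lt_of_le hεlt ((min_le_right _ _).trans (min_le_left _ _))
  have hε3 : ε < 1/(48*C₁*γ^2+1) :=
    lt_of_lt_of_le hεlt ((min_le_right _ _).trans (min_le_right _ _))
  set δp : ℝ := γ*ε^2*(3+ε) with hδpdef
  set δm : ℝ := γ*ε^2*(3-ε) with hδmdef
  clear_value δp δm
  have hδp_pos : 0 < δp := by rw [hδpdef]; positivity
  have hδm_pos : 0 < δm := by rw [hδmdef]; nlinarith [hγpos, hε, sq_nonneg ε]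
  have hδm_lt : δm < δp := by rw [hδpdef, hδmdef]; nlinarith [hγpos, hε, sq_nonneg ε]
  have hδp_le : δp ≤ 4*γ*ε^2 := by rw [hδpdef]; nlinarith [hγpos, hε, sq_nonneg ε]
  have h8 : γ * ε < 1/8 := by
    calc γ * ε < γ * (1/(8*γ)) := mul_lt_mul_of_pos_left hε2 hγpos
      _ = 1/8 := by field_simp
  have hδp_half : δp ≤ 1/2 := by
    have hε2le : ε^2 ≤ ε := by nlinarith
    calc δp ≤ 4*γ*ε^2 := hδp_le
      _ ≤ 4*(γ*ε) := by nlinarith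
      _ ≤ 1/2 := by linarith
  have hδm_half : δm ≤ 1/2 := le_trans hδm_lt.le hδp_half
  -- key smallness estimate
  have hkey : |c| * δp^2/3 + 2*M*δp^2 < ε^3/3 := by
    have hA : δp^2 ≤ 16*γ^2*ε^4 := by
      have := mul_self_le_mul_self hδp_pos.le hδp_le
      nlinarith
    have hD : (0:ℝ) < 48*C₁*γ^2+1 := by positivity
    have hB : 48*C₁*γ^2*ε < 1 := by
      have h := (lt_div_iff₀ hD).mp hε3
      nlinarith [h, hε]
    have hB' : 16*C₁*γ^2*ε < 1/3 := by linarith [mul_nonneg (mul_nonneg (mul_nonneg (by norm_num : (0:ℝ) ≤ 48) hC₁0) (sq_nonneg γ)) hε.le]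
    have hε3pos : 0 < ε^3 := by positivity
    have : C₁*δp^2 < ε^3/3 := by
      calc C₁*δp^2 ≤ C₁*(16*γ^2*ε^4) := mul_le_mul_of_nonneg_left hA hC₁0
        _ = (16*C₁*γ^2*ε)*ε^3 := by ring
        _ < (1/3)*ε^3 := mul_lt_mul_of_pos_right hB' hε3pos
        _ = ε^3/3 := by ring
    rw [hC₁def] at this; linarith
  have hkeym : |c| * δm^2/3 + 2*M*δm^2 < ε^3/3 := by
    have h := mul_self_le_mul_self hδm_pos.le hδm_lt.le
    have h2 : δm^2 ≤ δp^2 := by nlinarith [h]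
    have h3 := mul_le_mul_of_nonneg_left h2 (abs_nonneg c)
    have h4 := mul_le_mul_of_nonneg_left h2 hM0
    linarith
  have hcp : δp * (3 + c) = ε^2*(3+ε) := by
    rw [hδpdef]; linear_combination ε^2*(3+ε)*hγc
  have hcm : δm * (3 + c) = ε^2*(3-ε) := by
    rw [hδmdef]; linear_combination ε^2*(3-ε)*hγc
  -- Taylor bounds at the endpoints
  have hTp := hTay δp ⟨hδp_pos.le, hδp_half⟩
  have hTm := hTay δm ⟨hδm_pos.le, hδm_half⟩
  rw [abs_le] at hTp hTm
  -- sign at left endpoint 1 - δp : F < 0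
  have hFa : F ε (1 - δp) < 0 := by
    rw [hF]
    have h2a : (0:ℝ) < 2*(1-δp) := by linarith
    have hbr : 0 < ε^3/3 - c*δp^2/3 - 2*M*δp^2*(1-δp) := by
      have h1 : c*δp^2 ≤ |c| * δp^2 := mul_le_mul_of_nonneg_right (le_abs_self c) (sq_nonneg δp)
      have h2 : 2*M*δp^2*(1-δp) ≤ 2*M*δp^2 := by nlinarith [sq_nonneg δp, hM0, hδp_pos]
      linarith
    have hid : (1-ε^2)*δp^2 - (δp^2/2 - c*δp^3/6 + M*δp^4)*(2*(1-δp))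
        = δp^2*(ε^3/3 - c*δp^2/3 - 2*M*δp^2*(1-δp)) := by
      linear_combination (δp^2/3) * hcp
    have key : G (1-δp) * (2*(1-δp)) < (1-ε^2)*δp^2 := by
      have s1 : G (1-δp) * (2*(1-δp)) ≤ (δp^2/2 - c*δp^3/6 + M*δp^4)*(2*(1-δp)) :=
        mul_le_mul_of_nonneg_right (by linarith [hTp.2]) h2a.le
      have := mul_pos (pow_pos hδp_pos 2) hbr
      linarith
    have hdiv : G (1-δp) < (1-ε^2)*δp^2/(2*(1-δp)) := (lt_div_iff₀ h2a).mpr key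
    have e : -(1 - ε^2) * ((1-δp) - 1)^2 / (2*(1-δp)) = -((1-ε^2)*δp^2/(2*(1-δp))) := by
      ring
    rw [e]
    linarith
  -- sign at right endpoint 1 - δm : F > 0
  have hFb : 0 < F ε (1 - δm) := by
    rw [hF]
    have h2b : (0:ℝ) < 2*(1-δm) := by linarith
    have hbr : 0 < ε^3/3 + c*δm^2/3 - 2*M*δm^2*(1-δm) := by
      have h1 : -c*δm^2 ≤ |c| * δm^2 := mul_le_mul_of_nonneg_right (neg_le_abs c) (sq_nonneg δm)
      have h2 : 2*M*δm^2*(1-δm) ≤ 2*M*δm^2 := by nlinarith [sq_nonneg δm, hM0, hδm_pos]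
      linarith
    have hid : (δm^2/2 - c*δm^3/6 - M*δm^4)*(2*(1-δm)) - (1-ε^2)*δm^2
        = δm^2*(ε^3/3 + c*δm^2/3 - 2*M*δm^2*(1-δm)) := by
      linear_combination -(δm^2/3) * hcm
    have key : (1-ε^2)*δm^2 < G (1-δm) * (2*(1-δm)) := by
      have s1 : (δm^2/2 - c*δm^3/6 - M*δm^4)*(2*(1-δm)) ≤ G (1-δm) * (2*(1-δm)) :=
        mul_le_mul_of_nonneg_right (by linarith [hTm.1]) h2b.le
      have := mul_pos (pow_pos hδm_pos 2) hbr
      linarith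
    have hdiv : (1-ε^2)*δm^2/(2*(1-δm)) < G (1-δm) := (div_lt_iff₀ h2b).mpr key
    have e : -(1 - ε^2) * ((1-δm) - 1)^2 / (2*(1-δm)) = -((1-ε^2)*δm^2/(2*(1-δm))) := by
      ring
    rw [e]
    linarith
  -- continuity and IVT
  have hcont : ContinuousOn (F ε) (Icc (1-δp) (1-δm)) := by
    have hbase : ContinuousOn (fun ρ => -(1 - ε^2) * (ρ-1)^2 / (2*ρ) + G ρ)
        (Icc (1-δp) (1-δm)) := by
      apply ContinuousOn.add
      · apply ContinuousOn.div
        · fun_prop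
        · fun_prop
        · intro x hx
          have : (1:ℝ)/2 ≤ x := le_trans (by linarith) hx.1
          positivity
      · exact hG.continuous.continuousOn
    exact hbase.congr (fun ρ _ => hF ε ρ)
  have h0mem : (0:ℝ) ∈ Icc (F ε (1-δp)) (F ε (1-δm)) := ⟨hFa.le, hFb.le⟩
  obtain ⟨ρm, hmem, hval⟩ := intermediate_value_Icc (by linarith : (1-δp) ≤ (1-δm)) hcont h0mem
  have hep : 3*γ*ε^2 + γ*ε^3 = δp := by rw [hδpdef]; ring
  have hem : 3*γ*ε^2 - γ*ε^3 = δm := by rw [hδmdef]; ring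
  exact ⟨ρm, by linarith [hmem.1], by linarith [hmem.2], hval,
    by linarith [hmem.1], by linarith [hmem.2]⟩
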